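/- Let p0, pt, p1, p∞, p0t, p1t, p01 be complex numbers satisfying W = 0. Then the diagonal first minors of G (determinants of the submatrices deleting row k and column k) satisfy M11(G)·M44(G) = 4·(q1t² + q01² − p0t·q1t·q01) and M22(G)·M33(G) = 4·(q0t² + q01² − p1t·q0t·q01). -/

import Mathlib

/-!
As a function of `(p1t, p01)`, `W` is a quadratic polynomial with Hessian `!![2, p0t; p0t, 2]`,
and `q1t`, `q01` are its two partial derivatives. Pairing the gradient with the adjugate of
the Hessian gives `q1t² + q01² - p0t q1t q01 = (4 - p0t²) W + Δ`, where the discriminant `Δ`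
does not involve `p1t, p01` and factors as a product of two Fricke cubics. Each diagonal first
minor of `G` is `-2` times such a cubic, so the identity becomes the first claim on `W = 0`;
the second is its image under the symmetry `0 ↔ 1`.
-/

variable {R : Type*} [CommRing R]

/-- The Fricke cubic `tr [A, B] - 2` in the traces `a, b, c` of `A`, `B`, `AB`. -/
def frickeCubic (a b c : R) : R := a ^ 2 + b ^ 2 + c ^ 2 - a * b * c - 4

def jimboFricke (p0 pt p1 pinf p0t p1t p01 : R) : R :=
  p0t * p1t * p01 + p0t ^ 2 + p1t ^ 2 + p01 ^ 2
    - (p0 * pt + p1 * pinf) * p0t - (pt * p1 + p0 * pinf) * p1t - (p0 * p1 + pt * pinf) * p01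
    + (p0 * pt * p1 * pinf + p0 ^ 2 + pt ^ 2 + p1 ^ 2 + pinf ^ 2) - 4

def jimboFrickeGram (p0 pt p1 pinf p0t p1t : R) : Matrix (Fin 4) (Fin 4) R :=
  !![2, -p0, -pt, p1t;
     -p0, 2, p0t, -pinf;
     -pt, p0t, 2, -p1;
     p1t, -pinf, -p1, 2]

theorem jimboFricke_swap (p0 pt p1 pinf p0t p1t p01 : R) :
    jimboFricke p1 pt p0 pinf p1t p0t p01 = jimboFricke p0 pt p1 pinf p0t p1t p01 := by
  unfold jimboFricke; ring

theorem gradient_quadraticForm_adjugate (s x y u v d : R) :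
    let gx := 2 * x + s * y - u
    let gy := 2 * y + s * x - v
    gx ^ 2 + gy ^ 2 - s * gx * gy
      = (4 - s ^ 2) * (x ^ 2 + y ^ 2 + s * x * y - u * x - v * y + d)
        + (u ^ 2 + v ^ 2 - s * u * v - (4 - s ^ 2) * d) := by
  intro gx gy; ring

theorem jimboFricke_discriminant (p0 pt p1 pinf p0t : R) :
    let u := pt * p1 + p0 * pinf
    let v := p0 * p1 + pt * pinf
    u ^ 2 + v ^ 2 - p0t * u * v
        - (4 - p0t ^ 2) * (p0t ^ 2 - (p0 * pt + p1 * pinf) * p0t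
          + (p0 * pt * p1 * pinf + p0 ^ 2 + pt ^ 2 + p1 ^ 2 + pinf ^ 2) - 4)
      = frickeCubic p0t p1 pinf * frickeCubic p0t p0 pt := by
  intro u v; unfold frickeCubic; ring

theorem jimboFricke_gradient_identity (p0 pt p1 pinf p0t p1t p01 : R) :
    let q1t := 2 * p1t + p0t * p01 - (pt * p1 + p0 * pinf)
    let q01 := 2 * p01 + p0t * p1t - (p0 * p1 + pt * pinf)
    q1t ^ 2 + q01 ^ 2 - p0t * q1t * q01
      = (4 - p0t ^ 2) * jimboFricke p0 pt p1 pinf p0t p1t p01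
        + frickeCubic p0t p1 pinf * frickeCubic p0t p0 pt := by
  intro q1t q01
  rw [← jimboFricke_discriminant]
  unfold jimboFricke
  linear_combination gradient_quadraticForm_adjugate p0t p1t p01 (pt * p1 + p0 * pinf)
    (p0 * p1 + pt * pinf)
    (p0t ^ 2 - (p0 * pt + p1 * pinf) * p0t
      + (p0 * pt * p1 * pinf + p0 ^ 2 + pt ^ 2 + p1 ^ 2 + pinf ^ 2) - 4)

theorem det_fin_three_of_diag_two (a b c : R) :
    !![2, a, b; a, 2, c; b, c, 2].det = -2 * frickeCubic a b c := by
  rw [Matrix.det_fin_three]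
  simp only [frickeCubic, Matrix.of_apply, Matrix.cons_val', Matrix.cons_val_zero,
    Matrix.cons_val_fin_one, Matrix.cons_val_one, Matrix.cons_val]
  ring

section GramMinors

variable (p0 pt p1 pinf p0t p1t : R)

theorem det_jimboFrickeGram_submatrix_zero :
    ((jimboFrickeGram p0 pt p1 pinf p0t p1t).submatrix (Fin.succAbove 0) (Fin.succAbove 0)).det
      = -2 * frickeCubic p0t p1 pinf := by
  have hminor : (jimboFrickeGram p0 pt p1 pinf p0t p1t).submatrix (Fin.succAbove 0)
      (Fin.succAbove 0) = !![2, p0t, -pinf; p0t, 2, -p1; -pinf, -p1, 2] := by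
    ext i j; fin_cases i <;> fin_cases j <;> rfl
  rw [hminor, det_fin_three_of_diag_two]; unfold frickeCubic; ring

theorem det_jimboFrickeGram_submatrix_one :
    ((jimboFrickeGram p0 pt p1 pinf p0t p1t).submatrix (Fin.succAbove 1) (Fin.succAbove 1)).det
      = -2 * frickeCubic p1t p1 pt := by
  have hminor : (jimboFrickeGram p0 pt p1 pinf p0t p1t).submatrix (Fin.succAbove 1)
      (Fin.succAbove 1) = !![2, -pt, p1t; -pt, 2, -p1; p1t, -p1, 2] := by
    ext i j; fin_cases i <;> fin_cases j <;> rfl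
  rw [hminor, det_fin_three_of_diag_two]; unfold frickeCubic; ring

theorem det_jimboFrickeGram_submatrix_two :
    ((jimboFrickeGram p0 pt p1 pinf p0t p1t).submatrix (Fin.succAbove 2) (Fin.succAbove 2)).det
      = -2 * frickeCubic p1t p0 pinf := by
  have hminor : (jimboFrickeGram p0 pt p1 pinf p0t p1t).submatrix (Fin.succAbove 2)
      (Fin.succAbove 2) = !![2, -p0, p1t; -p0, 2, -pinf; p1t, -pinf, 2] := by
    ext i j; fin_cases i <;> fin_cases j <;> rfl
  rw [hminor, det_fin_three_of_diag_two]; unfold frickeCubic; ring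

theorem det_jimboFrickeGram_submatrix_three :
    ((jimboFrickeGram p0 pt p1 pinf p0t p1t).submatrix (Fin.succAbove 3) (Fin.succAbove 3)).det
      = -2 * frickeCubic p0t p0 pt := by
  have hminor : (jimboFrickeGram p0 pt p1 pinf p0t p1t).submatrix (Fin.succAbove 3)
      (Fin.succAbove 3) = !![2, -p0, -pt; -p0, 2, p0t; -pt, p0t, 2] := by
    ext i j; fin_cases i <;> fin_cases j <;> rfl
  rw [hminor, det_fin_three_of_diag_two]; unfold frickeCubic; ring

end GramMinors

theorem diagonal_minor_products_on_JimboFricke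
    (p0 pt p1 pinf p0t p1t p01 ω0t ω1t ω01 ω4 W q0t q1t q01 : ℂ)
    (hω0t : ω0t = p0 * pt + p1 * pinf)
    (hω1t : ω1t = pt * p1 + p0 * pinf)
    (hω01 : ω01 = p0 * p1 + pt * pinf)
    (hω4 : ω4 = p0 * pt * p1 * pinf + p0 ^ 2 + pt ^ 2 + p1 ^ 2 + pinf ^ 2)
    (hW : W = p0t * p1t * p01 + p0t ^ 2 + p1t ^ 2 + p01 ^ 2
      - ω0t * p0t - ω1t * p1t - ω01 * p01 + ω4 - 4)
    (hWzero : W = 0)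
    (hq0t : q0t = 2 * p0t + p1t * p01 - ω0t)
    (hq1t : q1t = 2 * p1t + p0t * p01 - ω1t)
    (hq01 : q01 = 2 * p01 + p0t * p1t - ω01)
    (G : Matrix (Fin 4) (Fin 4) ℂ)
    (hG : G = !![2, -p0, -pt, p1t;
                 -p0, 2, p0t, -pinf;
                 -pt, p0t, 2, -p1;
                 p1t, -pinf, -p1, 2]) :
    (G.submatrix (Fin.succAbove (0 : Fin 4)) (Fin.succAbove (0 : Fin 4))).det *
      (G.submatrix (Fin.succAbove (3 : Fin 4)) (Fin.succAbove (3 : Fin 4))).det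
        = 4 * (q1t ^ 2 + q01 ^ 2 - p0t * q1t * q01) ∧
    (G.submatrix (Fin.succAbove (1 : Fin 4)) (Fin.succAbove (1 : Fin 4))).det *
      (G.submatrix (Fin.succAbove (2 : Fin 4)) (Fin.succAbove (2 : Fin 4))).det
        = 4 * (q0t ^ 2 + q01 ^ 2 - p1t * q0t * q01) := by
  obtain rfl : G = jimboFrickeGram p0 pt p1 pinf p0t p1t := hG
  subst hω0t hω1t hω01 hω4 hW hq0t hq1t hq01
  have hJF : jimboFricke p0 pt p1 pinf p0t p1t p01 = 0 := hWzero
  have h0 := jimboFricke_gradient_identity p0 pt p1 pinf p0t p1t p01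
  have h1 := jimboFricke_gradient_identity p1 pt p0 pinf p1t p0t p01
  rw [jimboFricke_swap] at h1
  rw [det_jimboFrickeGram_submatrix_zero, det_jimboFrickeGram_submatrix_three,
    det_jimboFrickeGram_submatrix_one, det_jimboFrickeGram_submatrix_two]
  constructor
  · linear_combination (-4) * h0 + 4 * (p0t ^ 2 - 4) * hJF
  · linear_combination (-4) * h1 + 4 * (p1t ^ 2 - 4) * hJF
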